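/- Let ψ : [0,∞) → [0,∞) satisfy ψ(r) ≥ ψ_min > 0 for all r, let G_ψ = (V, E_ψ) be a symmetric connected graph on {1,...,N} with constant L := 1/(1 + d(G_ψ)|E_ψ^c|), where d(G_ψ) is the graph diameter and E_ψ^c the edge-complement. Then for any positions x^1,...,x^N and velocities v^1,...,v^N in R^d: -∑_{(i,j)∈E_ψ} ψ(|x^j - x^i|) |v^i - v^j|^2 ≤ -ψ_min · L · ∑_{i,j=1}^N |v^i - v^j|^2. -/

import Mathlib

/-!
Along a shortest path from `i` to `j`, which has at most `diam G` edges, the increments of `v`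
telescope to `v i - v j`; the triangle and Cauchy–Schwarz inequalities bound `‖v i - v j‖²` by
`diam G` times the edge energy `∑_{G.Adj a b} ‖v a - v b‖²`. Splitting `∑_{i,j} ‖v i - v j‖²` into
adjacent pairs (the energy itself) and non-adjacent ones (each bounded as above) gives
`∑_{i,j} ‖v i - v j‖² ≤ L⁻¹ · energy`, and `ψ ≥ ψmin` bounds the weighted energy below by
`ψmin · energy`.
-/

open Finset

namespace SimpleGraph

variable {V E : Type*} [SeminormedAddCommGroup E]

def edgeEnergy [Fintype V] (G : SimpleGraph V) [DecidableRel G.Adj] (v : V → E) : ℝ :=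
  ∑ q ∈ univ.filter (fun q : V × V => G.Adj q.1 q.2), ‖v q.1 - v q.2‖ ^ 2

variable {G : SimpleGraph V}

theorem Walk.sum_darts_sub (v : V → E) {i j : V} (w : G.Walk i j) :
    (w.darts.map fun d => v d.fst - v d.snd).sum = v i - v j := by
  induction w with
  | nil => simp
  | cons _ w ih =>
    rw [darts_cons, List.map_cons, List.sum_cons, ih]
    abel

theorem Walk.norm_sub_le_sum_darts (v : V → E) {i j : V} (w : G.Walk i j) :
    ‖v i - v j‖ ≤ (w.darts.map fun d => ‖v d.fst - v d.snd‖).sum := by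
  rw [← w.sum_darts_sub v]
  exact (List.le_sum_of_subadditive _ norm_zero.le norm_add_le _).trans_eq
    (by simp [Function.comp_def])

theorem Walk.IsPath.sq_norm_sub_le [Fintype V] [DecidableRel G.Adj] (v : V → E) {i j : V}
    {p : G.Walk i j} (hp : p.IsPath) : ‖v i - v j‖ ^ 2 ≤ p.length * G.edgeEnergy v := by
  classical
  -- a path has distinct darts, so its squared increments form a sub-sum of the energy
  have hnodup : p.darts.Nodup := Walk.darts_nodup_of_support_nodup hp.support_nodup
  set f : G.Dart → ℝ := fun d => ‖v d.fst - v d.snd‖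
  have hnorm : ‖v i - v j‖ ≤ ∑ d ∈ p.darts.toFinset, f d := by
    rw [List.sum_toFinset _ hnodup]
    exact p.norm_sub_le_sum_darts v
  have hcard : #p.darts.toFinset = p.length := by
    rw [List.toFinset_card_of_nodup hnodup, Walk.length_darts]
  have henergy : ∑ d ∈ p.darts.toFinset, f d ^ 2 ≤ G.edgeEnergy v := by
    rw [edgeEnergy, ← sum_image (g := Dart.toProd) (f := fun q => ‖v q.1 - v q.2‖ ^ 2)
      fun _ _ _ _ h => Dart.toProd_injective h]
    refine sum_le_sum_of_subset_of_nonneg ?_ fun _ _ _ => sq_nonneg _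
    rintro _ hq
    obtain ⟨d, -, rfl⟩ := mem_image.mp hq
    exact mem_filter.mpr ⟨mem_univ _, d.adj⟩
  calc ‖v i - v j‖ ^ 2 ≤ (∑ d ∈ p.darts.toFinset, f d) ^ 2 := by gcongr
    _ ≤ #p.darts.toFinset * ∑ d ∈ p.darts.toFinset, f d ^ 2 := sq_sum_le_card_mul_sum_sq
    _ ≤ p.length * G.edgeEnergy v := by rw [hcard]; gcongr

theorem Connected.sq_norm_sub_le_diam_mul [Fintype V] [DecidableRel G.Adj] (hG : G.Connected)
    (v : V → E) (i j : V) : ‖v i - v j‖ ^ 2 ≤ G.diam * G.edgeEnergy v := by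
  have : Nonempty V := ⟨i⟩
  obtain ⟨p, hp, hlen⟩ := hG.exists_path_of_dist i j
  have hdiam : p.length ≤ G.diam := hlen ▸ dist_le_diam (connected_iff_ediam_ne_top.mp hG)
  calc ‖v i - v j‖ ^ 2 ≤ p.length * G.edgeEnergy v := hp.sq_norm_sub_le v
    _ ≤ G.diam * G.edgeEnergy v := by
        gcongr
        exact sum_nonneg fun _ _ => sq_nonneg _

theorem Connected.sum_sq_norm_sub_le [Fintype V] [DecidableRel G.Adj] (hG : G.Connected)
    (v : V → E) :
    ∑ i, ∑ j, ‖v i - v j‖ ^ 2 ≤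
      (1 + G.diam * #(univ.filter fun q : V × V => ¬ G.Adj q.1 q.2)) * G.edgeEnergy v := by
  rw [← Fintype.sum_prod_type',
    ← sum_filter_add_sum_filter_not univ fun q : V × V => G.Adj q.1 q.2]
  have hnonadj : ∑ q ∈ univ.filter (fun q : V × V => ¬ G.Adj q.1 q.2), ‖v q.1 - v q.2‖ ^ 2 ≤
      #(univ.filter fun q : V × V => ¬ G.Adj q.1 q.2) * (G.diam * G.edgeEnergy v) := by
    rw [← nsmul_eq_mul, ← sum_const]
    exact sum_le_sum fun q _ => hG.sq_norm_sub_le_diam_mul v q.1 q.2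
  rw [← edgeEnergy]
  linarith

end SimpleGraph

theorem weighted_dissipation_lower_bound_general (N d : ℕ)
    (ψ : ℝ → ℝ) (ψmin : ℝ) (hψmin : 0 < ψmin) (hψ : ∀ r, 0 ≤ r → ψmin ≤ ψ r)
    (G : SimpleGraph (Fin N)) [DecidableRel G.Adj] (hG : G.Connected)
    (x v : Fin N → EuclideanSpace ℝ (Fin d)) :
    -(∑ p ∈ Finset.univ.filter (fun p : Fin N × Fin N => G.Adj p.1 p.2),
        ψ ‖x p.2 - x p.1‖ * ‖v p.1 - v p.2‖ ^ 2) ≤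
      -(ψmin * (1 + (G.diam : ℝ) *
          ((Finset.univ.filter (fun p : Fin N × Fin N => ¬ G.Adj p.1 p.2)).card : ℝ))⁻¹ *
        ∑ i : Fin N, ∑ j : Fin N, ‖v i - v j‖ ^ 2) := by
  set C : ℝ := 1 + G.diam * #(univ.filter fun p : Fin N × Fin N => ¬ G.Adj p.1 p.2)
  have hC : 0 < C := by positivity
  have hweighted : ψmin * G.edgeEnergy v ≤
      ∑ p ∈ univ.filter (fun p : Fin N × Fin N => G.Adj p.1 p.2),
        ψ ‖x p.2 - x p.1‖ * ‖v p.1 - v p.2‖ ^ 2 := by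
    rw [SimpleGraph.edgeEnergy, mul_sum]
    exact sum_le_sum fun p _ => by gcongr; exact hψ _ (norm_nonneg _)
  rw [neg_le_neg_iff]
  calc ψmin * C⁻¹ * ∑ i, ∑ j, ‖v i - v j‖ ^ 2 ≤ ψmin * C⁻¹ * (C * G.edgeEnergy v) := by
        gcongr
        exact hG.sum_sq_norm_sub_le v
    _ = ψmin * G.edgeEnergy v := by field_simp
    _ ≤ _ := hweighted

/-- Combining the lower bound `ψ ≥ ψ_min > 0` with the graph connectivity lemma:
`-∑_{(i,j)∈E_ψ} ψ(‖x j - x i‖)‖v i - v j‖² ≤ -ψ_min L ∑_{i,j} ‖v i - v j‖²`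
where `L = 1/(1 + d(G_ψ)|E_ψ^c|)`. -/
theorem weighted_dissipation_lower_bound (N d : ℕ) (hN : 0 < N)
    (ψ : ℝ → ℝ) (ψmin : ℝ) (hψmin : 0 < ψmin) (hψ : ∀ r, 0 ≤ r → ψmin ≤ ψ r)
    (G : SimpleGraph (Fin N)) [DecidableRel G.Adj] (hG : G.Connected)
    (x v : Fin N → EuclideanSpace ℝ (Fin d)) :
    -(∑ p ∈ Finset.univ.filter (fun p : Fin N × Fin N => G.Adj p.1 p.2),
        ψ ‖x p.2 - x p.1‖ * ‖v p.1 - v p.2‖ ^ 2) ≤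
      -(ψmin * (1 + (G.diam : ℝ) *
          ((Finset.univ.filter (fun p : Fin N × Fin N => ¬ G.Adj p.1 p.2)).card : ℝ))⁻¹ *
        ∑ i : Fin N, ∑ j : Fin N, ‖v i - v j‖ ^ 2) :=
  weighted_dissipation_lower_bound_general N d ψ ψmin hψmin hψ G hG x v
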